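/- Assume V⁺ admits a monomial parametrization with exponent matrix A (data p, A, K, ψ) and that the cone generator matrix E has no zero row. Let δ ∈ {−1,0,1}^n with δ ≠ 0 (a sign pattern, as arises in sign(rs(A)) ∩ sign(im(S))), and let F be any predicate on ℝ^{n−s}. Then there exist k ∈ K, c ∈ im₊(Z) and distinct a, b ∈ ℝ_{>0}^n such that (k,a) ∈ V⁺, (k,b) ∈ V⁺, Za = Zb = c, sign(b − a) = δ and F(c) holds, if and only if there exist a ∈ ℝ_{>0}^n and ξ ∈ ℝ_{>0}^{n−p} such that Z((ξ^A − 𝟙)⋆a) = 0, sign(ξ^A − 𝟙) = δ and F(Za) holds. -/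

import Mathlib

/-!
A monomial parametrization makes every fibre `{x : (k, x) ∈ V⁺}` a single orbit of the
multiplicative action `x ↦ ξ^A ⋆ x`, so two steady states `a, b` for the same `k` are exactly
the pairs `b = ξ^A ⋆ a`; then `b - a = (ξ^A - 𝟙) ⋆ a`, whose sign is that of `ξ^A - 𝟙`.
Conversely, the rate constants can be eliminated: since `E` has no zero row, `E 𝟙` is a positive
vector in `ker S`, and `k := E 𝟙 / φ(a)` makes any positive `a` a steady state.
-/

open Matrix

noncomputable section

/-- The monomial map φ: `phi Y x j = ∏ i, x i ^ Y i j`. -/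
def phi {n r : ℕ} (Y : Matrix (Fin n) (Fin r) ℕ) (x : Fin n → ℝ) : Fin r → ℝ :=
  fun j => ∏ i, x i ^ Y i j

/-- The positive steady state variety V⁺. -/
def Vplus {n r : ℕ} (Y : Matrix (Fin n) (Fin r) ℕ) (S : Matrix (Fin n) (Fin r) ℝ) :
    Set ((Fin r → ℝ) × (Fin n → ℝ)) :=
  {p | (∀ j, 0 < p.1 j) ∧ (∀ i, 0 < p.2 i) ∧
    S.mulVec (fun j => p.1 j * phi Y p.2 j) = 0}

/-- `E` is a cone generator matrix for `S`:
`E` is nonnegative and `ker S ∩ ℝ_{≥0}^r = {Eλ : λ ≥ 0}`. -/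
def IsConeGenMatrix {n r d : ℕ} (S : Matrix (Fin n) (Fin r) ℝ)
    (E : Matrix (Fin r) (Fin d) ℝ) : Prop :=
  (∀ j l, 0 ≤ E j l) ∧
  {v : Fin r → ℝ | S.mulVec v = 0 ∧ ∀ j, 0 ≤ v j} =
    {v : Fin r → ℝ | ∃ lam : Fin d → ℝ, (∀ l, 0 ≤ lam l) ∧ v = E.mulVec lam}

/-- The coefficient cone Λ(E). -/
def Lambda {r d : ℕ} (E : Matrix (Fin r) (Fin d) ℝ) : Set (Fin d → ℝ) :=
  {lam | (∀ l, 0 ≤ lam l) ∧ ∀ j, 0 < E.mulVec lam j}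

/-- `ξ^B`: for a rational `q × m` matrix `B`, `(ξ^B) j = ∏ i, ξ i ^ (B i j)` (real powers). -/
def vecPow {q m : ℕ} (ξ : Fin q → ℝ) (B : Matrix (Fin q) (Fin m) ℚ) : Fin m → ℝ :=
  fun j => ∏ i, ξ i ^ ((B i j : ℝ))

/-- V⁺ admits a monomial parametrization with exponent matrix `A` (data `p`, `A`, `K`, `ψ`). -/
def IsMonomialParamExp {n r : ℕ} (Y : Matrix (Fin n) (Fin r) ℕ)
    (S : Matrix (Fin n) (Fin r) ℝ) (p : ℕ) (A : Matrix (Fin (n - p)) (Fin n) ℚ)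
    (K : Set (Fin r → ℝ)) (ψ : (Fin r → ℝ) → (Fin n → ℝ)) : Prop :=
  p < n ∧ A.rank = n - p ∧ (∀ k ∈ K, ∀ j, 0 < k j) ∧ (∀ k ∈ K, ∀ i, 0 < ψ k i) ∧
  ∀ k x, (∀ j : Fin r, 0 < k j) → (∀ i : Fin n, 0 < x i) →
    ((k, x) ∈ Vplus Y S ↔ k ∈ K ∧
      ∃ ξ : Fin (n - p) → ℝ, (∀ l, 0 < ξ l) ∧ x = fun i => ψ k i * vecPow ξ A i)

/-- `Z` is a conservation matrix for `S` (with `s = rank S`):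
its rows form a basis of the left kernel of `S`. -/
def IsConservationMatrix {n r : ℕ} (S : Matrix (Fin n) (Fin r) ℝ) (s : ℕ)
    (Z : Matrix (Fin (n - s)) (Fin n) ℝ) : Prop :=
  S.rank = s ∧ s < n ∧ LinearIndependent ℝ (fun i => Z i) ∧
    Submodule.span ℝ (Set.range (fun i => Z i)) = LinearMap.ker S.vecMulLinear

/-- `im₊(Z) = {Zx : x ≥ 0}`. -/
def imPos {m n : ℕ} (Z : Matrix (Fin m) (Fin n) ℝ) : Set (Fin m → ℝ) :=
  {c | ∃ x : Fin n → ℝ, (∀ i, 0 ≤ x i) ∧ c = Z.mulVec x}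

/-- The real row space of a rational matrix. -/
def rowSpace {q m : ℕ} (A : Matrix (Fin q) (Fin m) ℚ) : Submodule ℝ (Fin m → ℝ) :=
  Submodule.span ℝ (Set.range (fun l => fun i => ((A l i : ℝ))))

/-- The column space (image) of `S`. -/
def colSpace {n r : ℕ} (S : Matrix (Fin n) (Fin r) ℝ) : Submodule ℝ (Fin n → ℝ) :=
  LinearMap.range S.mulVecLin

/-- Componentwise sign of a vector. -/
def signVec {m : ℕ} (v : Fin m → ℝ) : Fin m → ℝ := fun i => Real.sign (v i)

lemma Real.sign_mul_of_pos {x a : ℝ} (ha : 0 < a) : Real.sign (x * a) = Real.sign x := by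
  rcases lt_trichotomy x 0 with h | rfl | h
  · rw [Real.sign_of_neg h, Real.sign_of_neg (mul_neg_of_neg_of_pos h ha)]
  · rw [zero_mul]
  · rw [Real.sign_of_pos h, Real.sign_of_pos (mul_pos h ha)]

lemma signVec_mul_of_pos {m : ℕ} (t : Fin m → ℝ) {a : Fin m → ℝ} (ha : ∀ i, 0 < a i) :
    signVec (fun i => t i * a i) = signVec t :=
  funext fun i => Real.sign_mul_of_pos (ha i)

lemma mul_sub_self_eq {m : ℕ} (t a : Fin m → ℝ) :
    (fun i => t i * a i) - a = fun i => (t i - 1) * a i :=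
  funext fun i => by simp only [Pi.sub_apply]; ring

lemma vecPow_pos {q m : ℕ} {ξ : Fin q → ℝ} (hξ : ∀ i, 0 < ξ i)
    (B : Matrix (Fin q) (Fin m) ℚ) (j : Fin m) : 0 < vecPow ξ B j :=
  Finset.prod_pos fun i _ => Real.rpow_pos_of_pos (hξ i) _

lemma vecPow_mul {q m : ℕ} {ξ η : Fin q → ℝ} (hξ : ∀ i, 0 < ξ i) (hη : ∀ i, 0 < η i)
    (B : Matrix (Fin q) (Fin m) ℚ) (j : Fin m) :
    vecPow (fun i => ξ i * η i) B j = vecPow ξ B j * vecPow η B j := by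
  rw [vecPow, vecPow, vecPow, ← Finset.prod_mul_distrib]
  exact Finset.prod_congr rfl fun i _ => Real.mul_rpow (hξ i).le (hη i).le

lemma phi_pos {n r : ℕ} (Y : Matrix (Fin n) (Fin r) ℕ) {x : Fin n → ℝ}
    (hx : ∀ i, 0 < x i) (j : Fin r) : 0 < phi Y x j :=
  Finset.prod_pos fun i _ => pow_pos (hx i) _

lemma IsConeGenMatrix.exists_pos_mulVec_eq_zero {n r d : ℕ} {S : Matrix (Fin n) (Fin r) ℝ}
    {E : Matrix (Fin r) (Fin d) ℝ} (hE : IsConeGenMatrix S E) (hrow : ∀ j, ∃ l, E j l ≠ 0) :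
    ∃ v : Fin r → ℝ, (∀ j, 0 < v j) ∧ S *ᵥ v = 0 := by
  have hmem : E *ᵥ (fun _ => 1) ∈ {v : Fin r → ℝ | S *ᵥ v = 0 ∧ ∀ j, 0 ≤ v j} := by
    rw [hE.2]
    exact ⟨fun _ => 1, fun _ => zero_le_one, rfl⟩
  refine ⟨_, fun j => ?_, hmem.1⟩
  obtain ⟨l, hl⟩ := hrow j
  simp only [mulVec, dotProduct, mul_one]
  exact Finset.sum_pos' (fun l _ => hE.1 j l) ⟨l, Finset.mem_univ l, (hE.1 j l).lt_of_ne' hl⟩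

lemma exists_mem_Vplus_of_pos {n r : ℕ} (Y : Matrix (Fin n) (Fin r) ℕ)
    {S : Matrix (Fin n) (Fin r) ℝ} {v : Fin r → ℝ} (hv : ∀ j, 0 < v j) (hSv : S *ᵥ v = 0)
    {a : Fin n → ℝ} (ha : ∀ i, 0 < a i) : ∃ k, (k, a) ∈ Vplus Y S := by
  refine ⟨fun j => v j / phi Y a j, fun j => div_pos (hv j) (phi_pos Y ha j), ha, ?_⟩
  convert hSv using 2
  exact funext fun j => div_mul_cancel₀ _ (phi_pos Y ha j).ne'

namespace IsMonomialParamExp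

variable {n r p : ℕ} {Y : Matrix (Fin n) (Fin r) ℕ} {S : Matrix (Fin n) (Fin r) ℝ}
  {A : Matrix (Fin (n - p)) (Fin n) ℚ} {K : Set (Fin r → ℝ)} {ψ : (Fin r → ℝ) → (Fin n → ℝ)}

lemma mem_of_mem_Vplus (hparam : IsMonomialParamExp Y S p A K ψ) {k : Fin r → ℝ}
    {a : Fin n → ℝ} (ha : (k, a) ∈ Vplus Y S) : k ∈ K :=
  ((hparam.2.2.2.2 k a ha.1 ha.2.1).mp ha).1

lemma mem_Vplus_iff (hparam : IsMonomialParamExp Y S p A K ψ) {k : Fin r → ℝ}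
    {a b : Fin n → ℝ} (ha : (k, a) ∈ Vplus Y S) :
    (k, b) ∈ Vplus Y S ↔
      ∃ ξ : Fin (n - p) → ℝ, (∀ l, 0 < ξ l) ∧ b = fun i => vecPow ξ A i * a i := by
  have hiff := hparam.2.2.2.2 k
  obtain ⟨hkK, ξa, hξa, rfl⟩ := (hiff a ha.1 ha.2.1).mp ha
  constructor
  · intro hb
    obtain ⟨-, ξb, hξb, rfl⟩ := (hiff b hb.1 hb.2.1).mp hb
    have hξ : ∀ l, 0 < ξb l / ξa l := fun l => div_pos (hξb l) (hξa l)
    refine ⟨fun l => ξb l / ξa l, hξ, funext fun i => ?_⟩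
    have hvecPow : vecPow ξb A i = vecPow (fun l => ξb l / ξa l) A i * vecPow ξa A i := by
      rw [← vecPow_mul hξ hξa]
      congr 1
      exact funext fun l => (div_mul_cancel₀ _ (hξa l).ne').symm
    rw [hvecPow]
    ring
  · rintro ⟨ξ, hξ, rfl⟩
    have hb : ∀ i, 0 < vecPow ξ A i * (ψ k i * vecPow ξa A i) := fun i =>
      mul_pos (vecPow_pos hξ A i) (mul_pos (hparam.2.2.2.1 k hkK i) (vecPow_pos hξa A i))
    refine (hiff _ ha.1 hb).mpr ⟨hkK, fun l => ξ l * ξa l, fun l => mul_pos (hξ l) (hξa l), ?_⟩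
    funext i
    rw [vecPow_mul hξ hξa]
    ring

end IsMonomialParamExp

theorem multistationarity_with_sign_and_constraints_general {n r d s p : ℕ}
    (Y : Matrix (Fin n) (Fin r) ℕ) (S : Matrix (Fin n) (Fin r) ℝ)
    (A : Matrix (Fin (n - p)) (Fin n) ℚ) (K : Set (Fin r → ℝ))
    (ψ : (Fin r → ℝ) → (Fin n → ℝ)) (hparam : IsMonomialParamExp Y S p A K ψ)
    (E : Matrix (Fin r) (Fin d) ℝ) (hE : IsConeGenMatrix S E)
    (hrow : ∀ j, ∃ l, E j l ≠ 0)
    (Z : Matrix (Fin (n - s)) (Fin n) ℝ)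
    (δ : Fin n → ℝ) (hδ0 : δ ≠ 0)
    (F : (Fin (n - s) → ℝ) → Prop) :
    (∃ k ∈ K, ∃ c ∈ imPos Z, ∃ a b : Fin n → ℝ, a ≠ b ∧
        (k, a) ∈ Vplus Y S ∧ (k, b) ∈ Vplus Y S ∧
        Z.mulVec a = c ∧ Z.mulVec b = c ∧ signVec (b - a) = δ ∧ F c) ↔
      (∃ a : Fin n → ℝ, (∀ i, 0 < a i) ∧ ∃ ξ : Fin (n - p) → ℝ, (∀ l, 0 < ξ l) ∧
        Z.mulVec (fun i => (vecPow ξ A i - 1) * a i) = 0 ∧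
        signVec (fun i => vecPow ξ A i - 1) = δ ∧
        F (Z.mulVec a)) := by
  constructor
  · rintro ⟨k, -, c, -, a, b, -, ha, hb, rfl, hZb, rfl, hF⟩
    obtain ⟨ξ, hξ, rfl⟩ := (hparam.mem_Vplus_iff ha).mp hb
    refine ⟨a, ha.2.1, ξ, hξ, ?_, ?_, hF⟩
    · rw [← mul_sub_self_eq, mulVec_sub, hZb, sub_self]
    · rw [mul_sub_self_eq, signVec_mul_of_pos _ ha.2.1]
  · rintro ⟨a, ha, ξ, hξ, hZ0, rfl, hF⟩
    obtain ⟨v, hv, hSv⟩ := hE.exists_pos_mulVec_eq_zero hrow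
    obtain ⟨k, hka⟩ := exists_mem_Vplus_of_pos Y hv hSv ha
    have hkb := (hparam.mem_Vplus_iff hka).mpr ⟨ξ, hξ, rfl⟩
    refine ⟨k, hparam.mem_of_mem_Vplus hka, _, ⟨a, fun i => (ha i).le, rfl⟩, a, _, ?_, hka, hkb,
      rfl, ?_, ?_, hF⟩
    · intro hab
      refine hδ0 (funext fun i => ?_)
      have hi : vecPow ξ A i = 1 := by simpa [(ha i).ne'] using (congrFun hab i).symm
      simp [signVec, hi]
    · rw [← sub_eq_zero, ← mulVec_sub, mul_sub_self_eq, hZ0]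
    · rw [mul_sub_self_eq, signVec_mul_of_pos _ ha]

/-- multistationarity for a prescribed sign pattern δ together with a
constraint F on the total concentrations, characterized without rate constants. -/
theorem multistationarity_with_sign_and_constraints {n r d s p : ℕ} (hn : 1 ≤ n) (hr : 1 ≤ r)
    (Y : Matrix (Fin n) (Fin r) ℕ) (S : Matrix (Fin n) (Fin r) ℝ)
    (A : Matrix (Fin (n - p)) (Fin n) ℚ) (K : Set (Fin r → ℝ))
    (ψ : (Fin r → ℝ) → (Fin n → ℝ)) (hparam : IsMonomialParamExp Y S p A K ψ)
    (E : Matrix (Fin r) (Fin d) ℝ) (hE : IsConeGenMatrix S E)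
    (hrow : ∀ j, ∃ l, E j l ≠ 0)
    (Z : Matrix (Fin (n - s)) (Fin n) ℝ) (hZ : IsConservationMatrix S s Z)
    (δ : Fin n → ℝ) (hδ : ∀ i, δ i = -1 ∨ δ i = 0 ∨ δ i = 1) (hδ0 : δ ≠ 0)
    (F : (Fin (n - s) → ℝ) → Prop) :
    (∃ k ∈ K, ∃ c ∈ imPos Z, ∃ a b : Fin n → ℝ, a ≠ b ∧
        (k, a) ∈ Vplus Y S ∧ (k, b) ∈ Vplus Y S ∧
        Z.mulVec a = c ∧ Z.mulVec b = c ∧ signVec (b - a) = δ ∧ F c) ↔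
      (∃ a : Fin n → ℝ, (∀ i, 0 < a i) ∧ ∃ ξ : Fin (n - p) → ℝ, (∀ l, 0 < ξ l) ∧
        Z.mulVec (fun i => (vecPow ξ A i - 1) * a i) = 0 ∧
        signVec (fun i => vecPow ξ A i - 1) = δ ∧
        F (Z.mulVec a)) :=
  multistationarity_with_sign_and_constraints_general Y S A K ψ hparam E hE hrow Z δ hδ0 F
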